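/- Fix m, δ > 0, d₅ > 0, and k, α, d₆ ∈ ℝ, and define v_φ(A) = d₆ / √(d₅ + (m(m+δ)/δ) A²) for A ∈ ℝ. Let A, θ : ℝ → ℝ be differentiable curves with A(t) > 0 for all t, satisfying the polar-coordinate equations of the reduced planar ball bearing system: Ȧ(t) = −k cos(θ(t) − α) and A(t) θ̇(t) = k sin(θ(t) − α) + ((m+2δ)/(2(m+δ))) A(t) v_φ(A(t)). Then the function k A(t) sin(θ(t) − α) + ((m+2δ) δ d₆ / (2m(m+δ)²)) √(d₅ + (m(m+δ)/δ) A(t)²) is constant in t. This quadrature completes the explicit integration of the planar ball bearing problem. -/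

import Mathlib

/-! The equations have the shape `Ȧ = -k cos ψ`, `A ψ̇ = k sin ψ + g(A)` with `ψ = θ - α`, so
`d/dt (k A sin ψ) = k cos ψ (A ψ̇ - k sin ψ) = k cos ψ · g(A)`, which is cancelled by
`d/dt G(A) = -k cos ψ · G'(A)` for any primitive `G` of `g`. Here `g(A) = μ A v_φ(A)` with
`μ = (m+2δ)/(2(m+δ))`, and a primitive is a constant multiple of `√(d₅ + (m(m+δ)/δ)A²)`. -/

open Real

theorem polar_first_integral_eq {k α : ℝ} {g G A θ θ' : ℝ → ℝ}
    (hG : ∀ a, HasDerivAt G (g a) a)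
    (hA : ∀ t, HasDerivAt A (-k * cos (θ t - α)) t)
    (hθ : ∀ t, HasDerivAt θ (θ' t) t)
    (hAθ : ∀ t, A t * θ' t = k * sin (θ t - α) + g (A t)) (s t : ℝ) :
    k * A s * sin (θ s - α) + G (A s) = k * A t * sin (θ t - α) + G (A t) := by
  have hderiv : ∀ t, HasDerivAt (fun t => k * A t * sin (θ t - α) + G (A t)) 0 t := by
    intro t
    have hsin := ((hθ t).sub_const α).sin
    refine ((((hA t).const_mul k).mul hsin).add ((hG (A t)).comp t (hA t))).congr_deriv ?_
    linear_combination k * cos (θ t - α) * hAθ t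
  exact is_const_of_deriv_eq_zero (fun t => (hderiv t).differentiableAt)
    (fun t => (hderiv t).deriv) s t

theorem hasDerivAt_const_mul_sqrt_add_mul_sq {b c d : ℝ} (hc : 0 ≤ c) (hd : 0 < d) (a : ℝ) :
    HasDerivAt (fun a => b * √(d + c * a ^ 2)) (b * c * a / √(d + c * a ^ 2)) a := by
  have hpos : 0 < d + c * a ^ 2 := by positivity
  have hsqrt : √(d + c * a ^ 2) ≠ 0 := (sqrt_pos.2 hpos).ne'
  refine (((hasDerivAt_pow 2 a).const_mul c).const_add d).sqrt hpos.ne' |>.const_mul b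
    |>.congr_deriv ?_
  field_simp
  ring

theorem planar_ball_bearing_quadrature
    (m δ d₅ k α d₆ : ℝ) (hm : 0 < m) (hδ : 0 < δ) (hd₅ : 0 < d₅)
    (vφ : ℝ → ℝ)
    (hvφ : ∀ A : ℝ, vφ A = d₆ / Real.sqrt (d₅ + (m * (m + δ) / δ) * A ^ 2))
    (A θ : ℝ → ℝ)
    (hA : ∀ t : ℝ, HasDerivAt A (-k * Real.cos (θ t - α)) t)
    (hθ : ∀ t : ℝ, A t * deriv θ t =
      k * Real.sin (θ t - α) + ((m + 2 * δ) / (2 * (m + δ))) * A t * vφ (A t))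
    (hθdiff : Differentiable ℝ θ) :
    ∀ s t : ℝ,
      k * A s * Real.sin (θ s - α)
          + ((m + 2 * δ) * δ * d₆ / (2 * m * (m + δ) ^ 2))
            * Real.sqrt (d₅ + (m * (m + δ) / δ) * A s ^ 2) =
        k * A t * Real.sin (θ t - α)
          + ((m + 2 * δ) * δ * d₆ / (2 * m * (m + δ) ^ 2))
            * Real.sqrt (d₅ + (m * (m + δ) / δ) * A t ^ 2) := by
  have hG : ∀ a, HasDerivAt
      (fun a => (m + 2 * δ) * δ * d₆ / (2 * m * (m + δ) ^ 2) * √(d₅ + m * (m + δ) / δ * a ^ 2))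
      ((m + 2 * δ) / (2 * (m + δ)) * a * vφ a) a := by
    intro a
    refine (hasDerivAt_const_mul_sqrt_add_mul_sq
      (b := (m + 2 * δ) * δ * d₆ / (2 * m * (m + δ) ^ 2)) (c := m * (m + δ) / δ)
      (by positivity) hd₅ a).congr_deriv ?_
    rw [hvφ]
    field_simp
  exact polar_first_integral_eq hG hA (fun t => (hθdiff t).hasDerivAt) hθ
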